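/- arXiv:2407.05484 — 4 statements merged into one kernel-verified Lean document; each statement's English description precedes it below -/
import Mathlib

section
/- For any non-decreasing price curve p:[N]→[0,1] and m buyer types with non-decreasing valuation curves v_i:[N]→[0,1], there exists a non-decreasing step function p̄:[N]→[0,1] with at most m jumps (points n where p̄(n+1)>p̄(n)) such that for every distribution q over the m types, the expected revenue under p̄ is at least the expected revenue under p, where a type-i buyer purchases n_{i,p} = max(argmax_n (v_i(n)-p(n))) if max utility is nonnegative and 0 otherwise, and revenue from type i is p(n_{i,p}). -/
/-!
Let `T` be the set of amounts bought under `p` by the `m` types, and let `p̄ n` be the price `p`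
charges at the first point of `T` at or after `n` (and `1` beyond the last one). Then `p̄` is
non-decreasing, agrees with `p` on `T`, lies above `p` elsewhere and can only jump at points of
`T`. Raising prices away from a buyer's purchase point keeps that point a utility maximizer, so
every buyer buys at least as much under `p̄`, and pays at least as much since `p̄` is monotone.
-/

open Classical in
/-- The amount of data a buyer with valuation `v` purchases at price curve `p`:
`0` if `v n < p n` for all `n ∈ {1,…,N}`, else the largest utility maximizer in `{1,…,N}`. -/
noncomputable def buy (N : ℕ) (v p : ℕ → ℝ) : ℕ :=
  if ∀ n ∈ Finset.Icc 1 N, v n < p n then 0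
  else WithBot.unbotD 0 (((Finset.Icc 1 N).filter
      (fun n => ∀ k ∈ Finset.Icc 1 N, v k - p k ≤ v n - p n)).max)

/-- Expected revenue of price curve `p` under type distribution `q`. -/
noncomputable def rev (N m : ℕ) (v : Fin m → ℕ → ℝ) (q : Fin m → ℝ) (p : ℕ → ℝ) : ℝ :=
  ∑ i, q i * p (buy N (v i) p)

open Finset

section buy

variable {N : ℕ} {v p : ℕ → ℝ}

lemma buy_of_forall_lt (h : ∀ n ∈ Icc 1 N, v n < p n) : buy N v p = 0 := by
  rw [buy, if_pos h]

open Classical in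
lemma isGreatest_buy (h : ∃ n ∈ Icc 1 N, p n ≤ v n) :
    IsGreatest {n | n ∈ Icc 1 N ∧ ∀ k ∈ Icc 1 N, v k - p k ≤ v n - p n} (buy N v p) := by
  have hlt : ¬ ∀ n ∈ Icc 1 N, v n < p n := by push Not; exact h
  obtain ⟨n₀, hn₀, -⟩ := h
  set S := (Icc 1 N).filter (fun n => ∀ k ∈ Icc 1 N, v k - p k ≤ v n - p n)
  have hS : S.Nonempty := by
    obtain ⟨n, hn, hmax⟩ := exists_max_image (Icc 1 N) (fun n => v n - p n) ⟨n₀, hn₀⟩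
    exact ⟨n, by simp only [S, mem_filter]; exact ⟨hn, hmax⟩⟩
  have hbuy : buy N v p = S.max' hS := by
    rw [buy, if_neg hlt, ← coe_max' hS]
    rfl
  rw [hbuy]
  simpa [S, coe_filter] using isGreatest_max' S hS

lemma buy_le (N : ℕ) (v p : ℕ → ℝ) : buy N v p ≤ N := by
  by_cases h : ∀ n ∈ Icc 1 N, v n < p n
  · simp [buy_of_forall_lt h]
  · push Not at h
    exact (mem_Icc.1 (isGreatest_buy h).1.1).2

lemma buy_le_buy_of_le {p' : ℕ → ℝ} (hle : ∀ n ∈ Icc 1 N, p n ≤ p' n)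
    (heq : p' (buy N v p) = p (buy N v p)) : buy N v p ≤ buy N v p' := by
  by_cases h : ∀ n ∈ Icc 1 N, v n < p n
  · simp [buy_of_forall_lt h]
  push Not at h
  obtain ⟨⟨hmem, hmax⟩, -⟩ := isGreatest_buy h
  obtain ⟨n₀, hn₀, hpv⟩ := h
  have hmax' : ∀ k ∈ Icc 1 N, v k - p' k ≤ v (buy N v p) - p' (buy N v p) := fun k hk => by
    linarith [hle k hk, hmax k hk]
  have hbuys : ∃ n ∈ Icc 1 N, p' n ≤ v n :=
    ⟨buy N v p, hmem, by linarith [hmax n₀ hn₀]⟩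
  exact (isGreatest_buy hbuys).2 ⟨hmem, hmax'⟩

end buy

noncomputable def nextPrice (T : Finset ℕ) (p : ℕ → ℝ) (n : ℕ) : ℝ :=
  if h : (T.filter (n ≤ ·)).Nonempty then p ((T.filter (n ≤ ·)).min' h) else 1

section nextPrice

variable {N : ℕ} {T : Finset ℕ} {p : ℕ → ℝ}

lemma nextPrice_of_mem {t : ℕ} (ht : t ∈ T) : nextPrice T p t = p t := by
  have hmem : t ∈ T.filter (t ≤ ·) := mem_filter.2 ⟨ht, le_rfl⟩
  have hmin : (T.filter (t ≤ ·)).min' ⟨t, hmem⟩ = t :=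
    le_antisymm (min'_le _ _ hmem) (le_min' _ _ _ fun s hs => (mem_filter.1 hs).2)
  rw [nextPrice, dif_pos ⟨t, hmem⟩, hmin]

lemma nextPrice_succ_of_notMem {n : ℕ} (hn : n ∉ T) :
    nextPrice T p (n + 1) = nextPrice T p n := by
  have hfilter : T.filter (n + 1 ≤ ·) = T.filter (n ≤ ·) := by
    ext t
    simp only [mem_filter]
    refine ⟨fun ⟨ht, hle⟩ => ⟨ht, by omega⟩, fun ⟨ht, hle⟩ => ⟨ht, ?_⟩⟩
    rcases hle.eq_or_lt with rfl | hlt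
    · exact absurd ht hn
    · exact hlt
  simp only [nextPrice, hfilter]

lemma card_filter_nextPrice_lt_succ_le (N : ℕ) :
    ((range N).filter (fun n => nextPrice T p n < nextPrice T p (n + 1))).card ≤ T.card := by
  refine card_le_card fun n hn => ?_
  by_contra hnT
  exact (mem_filter.1 hn).2.ne (nextPrice_succ_of_notMem hnT).symm

variable (hT : ∀ t ∈ T, t ≤ N)
include hT

lemma min'_filter_mem_Icc {n : ℕ} (h : (T.filter (n ≤ ·)).Nonempty) :
    (T.filter (n ≤ ·)).min' h ∈ Set.Icc n N := by
  have hmem := mem_filter.1 ((T.filter (n ≤ ·)).min'_mem h)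
  exact ⟨hmem.2, hT _ hmem.1⟩

lemma nextPrice_mem_Icc (hpb : ∀ n ≤ N, p n ∈ Set.Icc (0 : ℝ) 1) (n : ℕ) :
    nextPrice T p n ∈ Set.Icc (0 : ℝ) 1 := by
  unfold nextPrice
  split_ifs with h
  · exact hpb _ (min'_filter_mem_Icc hT h).2
  · exact ⟨zero_le_one, le_rfl⟩

lemma monotone_nextPrice (hp : MonotoneOn p (Set.Iic N))
    (hpb : ∀ n ≤ N, p n ∈ Set.Icc (0 : ℝ) 1) : Monotone (nextPrice T p) := by
  intro a b hab
  by_cases hb : (T.filter (b ≤ ·)).Nonempty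
  · have hsub : T.filter (b ≤ ·) ⊆ T.filter (a ≤ ·) := fun t ht =>
      mem_filter.2 ⟨(mem_filter.1 ht).1, hab.trans (mem_filter.1 ht).2⟩
    have ha := hb.mono hsub
    rw [nextPrice, nextPrice, dif_pos ha, dif_pos hb]
    exact hp (Set.mem_Iic.2 (min'_filter_mem_Icc hT ha).2) (Set.mem_Iic.2 (min'_filter_mem_Icc hT hb).2)
      (min'_subset _ hsub)
  · rw [show nextPrice T p b = 1 from dif_neg hb]
    exact (nextPrice_mem_Icc hT hpb a).2

lemma le_nextPrice (hp : MonotoneOn p (Set.Iic N))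
    (hpb : ∀ n ≤ N, p n ∈ Set.Icc (0 : ℝ) 1) {n : ℕ} (hn : n ≤ N) : p n ≤ nextPrice T p n := by
  unfold nextPrice
  split_ifs with h
  · exact hp (Set.mem_Iic.2 hn) (Set.mem_Iic.2 (min'_filter_mem_Icc hT h).2) (min'_filter_mem_Icc hT h).1
  · exact (hpb n hn).2

end nextPrice

theorem mstep_exists_general (N m : ℕ)
    (v : Fin m → ℕ → ℝ)
    (p : ℕ → ℝ)
    (hpmono : ∀ a b : ℕ, a ≤ b → b ≤ N → p a ≤ p b)
    (hpb : ∀ n ≤ N, p n ∈ Set.Icc (0:ℝ) 1) :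
    ∃ pbar : ℕ → ℝ,
      (∀ a b : ℕ, a ≤ b → b ≤ N → pbar a ≤ pbar b) ∧
      (∀ n ≤ N, pbar n ∈ Set.Icc (0:ℝ) 1) ∧
      ((Finset.range N).filter (fun n => pbar n < pbar (n+1))).card ≤ m ∧
      ∀ q : Fin m → ℝ, (∀ i, 0 ≤ q i) → (∑ i, q i) = 1 →
        rev N m v q p ≤ rev N m v q pbar := by
  set T := univ.image fun i => buy N (v i) p
  have hT : ∀ t ∈ T, t ≤ N := by
    simp only [T, mem_image, mem_univ, true_and, forall_exists_index, forall_apply_eq_imp_iff]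
    exact fun i => buy_le N (v i) p
  have hp : MonotoneOn p (Set.Iic N) := fun a _ b hb hab => hpmono a b hab hb
  have hmono := monotone_nextPrice hT hp hpb
  have hpays (i : Fin m) : p (buy N (v i) p) ≤ nextPrice T p (buy N (v i) (nextPrice T p)) := by
    have hbought : buy N (v i) p ∈ T := mem_image_of_mem _ (mem_univ i)
    rw [← nextPrice_of_mem (p := p) hbought]
    exact hmono (buy_le_buy_of_le (fun n hn => le_nextPrice hT hp hpb (mem_Icc.1 hn).2)
      (nextPrice_of_mem hbought))
  have hcard : T.card ≤ m := card_image_le.trans_eq (by simp)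
  refine ⟨nextPrice T p, fun a b hab _ => hmono hab, fun n _ => nextPrice_mem_Icc hT hpb n,
    (card_filter_nextPrice_lt_succ_le N).trans hcard, fun q hq _ => ?_⟩
  exact sum_le_sum fun i _ => mul_le_mul_of_nonneg_left (hpays i) (hq i)

/-- for any non-decreasing price curve there is a non-decreasing
price curve with at most `m` jumps yielding at least as much revenue for every
type distribution. -/
theorem mstep_exists (N m : ℕ)
    (v : Fin m → ℕ → ℝ)
    (hvmono : ∀ i, ∀ a b : ℕ, a ≤ b → b ≤ N → v i a ≤ v i b)
    (hv0 : ∀ i, v i 0 = 0)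
    (hvb : ∀ i, ∀ n ≤ N, v i n ∈ Set.Icc (0:ℝ) 1)
    (p : ℕ → ℝ)
    (hpmono : ∀ a b : ℕ, a ≤ b → b ≤ N → p a ≤ p b)
    (hpb : ∀ n ≤ N, p n ∈ Set.Icc (0:ℝ) 1)
    (hp0 : p 0 = 0) :
    ∃ pbar : ℕ → ℝ,
      (∀ a b : ℕ, a ≤ b → b ≤ N → pbar a ≤ pbar b) ∧
      (∀ n ≤ N, pbar n ∈ Set.Icc (0:ℝ) 1) ∧
      ((Finset.range N).filter (fun n => pbar n < pbar (n+1))).card ≤ m ∧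
      ∀ q : Fin m → ℝ, (∀ i, 0 ≤ q i) → (∑ i, q i) = 1 →
        rev N m v q p ≤ rev N m v q pbar :=
  mstep_exists_general N m v p hpmono hpb
end

section
/- Let 0<ε<1 and m≥1. Define Z_i = ε(1+ε)^i for i ≥ 0, and for each i let d_i = (ε/m)·Z_{i−1}. If values p̄_1 ≤ ... ≤ p̄_k (k ≤ m) satisfy p̄_j ≥ Z_{i_j} for indices i_1 ≤ ... ≤ i_k, and one sets p_j = w_j − (j−1)d_{i_j} where w_j ∈ [Z_{i_j}, p̄_j] with p̄_j − w_j < d_{i_j}, then p_j ≥ p̄_j/(1+ε) for all j. -/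
/-- the rounding-down-with-staggered-deductions step keeps each price
within a `(1+ε)` multiplicative factor. -/
theorem rounded_price_ge (ε : ℝ) (hε0 : 0 < ε) (hε1 : ε < 1)
    (m k : ℕ) (hm : 1 ≤ m) (hk : k ≤ m)
    (Z : ℕ → ℝ) (hZ : ∀ i, Z i = ε * (1 + ε) ^ i)
    (idx : Fin k → ℕ) (hidx1 : ∀ j, 1 ≤ idx j) (hidxmono : Monotone idx)
    (pbar w p : Fin k → ℝ) (hpbarmono : Monotone pbar)
    (hlow : ∀ j, Z (idx j) ≤ pbar j)
    (hw1 : ∀ j, Z (idx j) ≤ w j) (hw2 : ∀ j, w j ≤ pbar j)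
    (hw3 : ∀ j, pbar j - w j < (ε / m) * Z (idx j - 1))
    (hp : ∀ j : Fin k, p j = w j - (j : ℕ) * ((ε / m) * Z (idx j - 1))) :
    ∀ j, pbar j / (1 + ε) ≤ p j := by
  intro j
  have h1 : (0:ℝ) < 1 + ε := by linarith
  have hi := hidx1 j
  have hZi : Z (idx j) = (1 + ε) * Z (idx j - 1) := by
    obtain ⟨n, hn⟩ : ∃ n, idx j = n + 1 := ⟨idx j - 1, (Nat.succ_pred_eq_of_pos hi).symm⟩
    rw [hZ, hZ, hn, Nat.add_sub_cancel, pow_succ]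
    ring
  have hZpos : 0 < Z (idx j - 1) := by
    rw [hZ]; positivity
  have hmpos : (0:ℝ) < m := by exact_mod_cast hm
  have hjm : ((j : ℕ) : ℝ) + 1 ≤ m := by
    have : (j : ℕ) + 1 ≤ m := le_trans j.isLt hk
    exact_mod_cast this
  have hd : ((j : ℕ) : ℝ) * ((ε / m) * Z (idx j - 1)) + (ε / m) * Z (idx j - 1)
      ≤ ε * Z (idx j - 1) := by
    have : (((j : ℕ) : ℝ) + 1) * ((ε / m) * Z (idx j - 1)) ≤ (m : ℝ) * ((ε / m) * Z (idx j - 1)) := by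
      apply mul_le_mul_of_nonneg_right hjm
      positivity
    calc ((j : ℕ) : ℝ) * ((ε / m) * Z (idx j - 1)) + (ε / m) * Z (idx j - 1)
        = (((j : ℕ) : ℝ) + 1) * ((ε / m) * Z (idx j - 1)) := by ring
      _ ≤ (m : ℝ) * ((ε / m) * Z (idx j - 1)) := this
      _ = ε * Z (idx j - 1) := by field_simp
  have hlb : pbar j - ε * Z (idx j - 1) ≤ p j := by
    have h3 := hw3 j
    rw [hp j]
    linarith
  have hZp : (1 + ε) * Z (idx j - 1) ≤ pbar j := by
    rw [← hZi]; exact hlow j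
  rw [div_le_iff₀ h1]
  nlinarith [hZpos]
end

section
/- Given a k-step function p with step values p_1,...,p_k (not necessarily monotone in value), define S = {i ∈ [k] : ∃ j<i with p_j > p_i}, and define p' by p'_i = p_i for i ∉ S and p'_i = max{p_j : j<i, j∉S} for i ∈ S. Then p' is non-decreasing, p' ≥ p pointwise, and if (p̄_j − p_j) is non-decreasing in j for some non-decreasing sequence p̄, then (p̄_j − p'_j) is also non-decreasing in j. -/
open Classical in
/-- The "ironing" of the step values `p`: values that drop below an earlier value are
replaced by the maximum of earlier values not in the bad set. -/
noncomputable def ironed (k : ℕ) (p : Fin k → ℝ) : Fin k → ℝ := fun i =>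
  if ∃ j < i, p i < p j then
    sSup {x : ℝ | ∃ j, j < i ∧ ¬(∃ l < j, p j < p l) ∧ p j = x}
  else p i

open Finset in
lemma ironed_eq_sup (k : ℕ) (p : Fin k → ℝ) (i : Fin k) :
    ironed k p i = (Iic i).sup' nonempty_Iic p := by
  unfold ironed
  by_cases h : ∃ j < i, p i < p j
  · rw [if_pos h]
    obtain ⟨j, hji, hpj⟩ := h
    have hne : (Iio i).Nonempty := ⟨j, mem_Iio.2 hji⟩
    obtain ⟨j0, hj0, hj0eq⟩ := exists_mem_eq_sup' hne p
    set M := (Iio i).sup' hne p with hM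
    have hub : ∀ l, l < i → p l ≤ M := fun l hl => le_sup' p (mem_Iio.2 hl)
    have hj0i : j0 < i := mem_Iio.1 hj0
    have hTmem : M ∈ {x : ℝ | ∃ j, j < i ∧ ¬(∃ l < j, p j < p l) ∧ p j = x} := by
      refine ⟨j0, hj0i, ?_, hj0eq.symm⟩
      rintro ⟨l, hl, hlt⟩
      have := hub l (hl.trans hj0i)
      rw [← hj0eq] at hlt
      linarith
    have hbdd : ∀ x ∈ {x : ℝ | ∃ j, j < i ∧ ¬(∃ l < j, p j < p l) ∧ p j = x}, x ≤ M := by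
      rintro x ⟨j', hj', _, rfl⟩
      exact hub j' hj'
    have hsup : sSup {x : ℝ | ∃ j, j < i ∧ ¬(∃ l < j, p j < p l) ∧ p j = x} = M :=
      le_antisymm (csSup_le ⟨M, hTmem⟩ hbdd) (le_csSup ⟨M, hbdd⟩ hTmem)
    rw [hsup]
    apply le_antisymm
    · rw [hj0eq]
      exact le_sup' p (mem_Iic.2 hj0i.le)
    · apply sup'_le
      intro l hl
      rcases eq_or_lt_of_le (mem_Iic.1 hl) with rfl | hlt
      · exact hpj.le.trans (hub j hji)
      · exact hub l hlt
  · rw [if_neg h]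
    push_neg at h
    apply le_antisymm
    · exact le_sup' p (mem_Iic.2 le_rfl)
    · apply sup'_le
      intro l hl
      rcases eq_or_lt_of_le (mem_Iic.1 hl) with rfl | hlt
      · exact le_rfl
      · exact h l hlt

/-- the ironed curve is non-decreasing, dominates `p` pointwise, and
preserves monotonicity of differences to any non-decreasing `p̄`. -/
theorem ironed_properties (k : ℕ) (p : Fin k → ℝ) :
    Monotone (ironed k p) ∧ (∀ i, p i ≤ ironed k p i) ∧
    (∀ pbar : Fin k → ℝ, Monotone pbar → Monotone (fun j => pbar j - p j) →
      Monotone (fun j => pbar j - ironed k p j)) := by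
  refine ⟨?_, ?_, ?_⟩
  · intro i j hij
    rw [ironed_eq_sup, ironed_eq_sup]
    exact Finset.sup'_le _ _ fun l hl =>
      Finset.le_sup' p (Finset.mem_Iic.2 ((Finset.mem_Iic.1 hl).trans hij))
  · intro i
    rw [ironed_eq_sup]
    exact Finset.le_sup' p (Finset.mem_Iic.2 le_rfl)
  · intro pbar hpbar hdiff i j hij
    simp only
    rw [ironed_eq_sup, ironed_eq_sup]
    obtain ⟨l0, hl0, hl0eq⟩ :=
      Finset.exists_mem_eq_sup' (Finset.nonempty_Iic (a := j)) p
    rw [hl0eq]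
    have hl0j : l0 ≤ j := Finset.mem_Iic.1 hl0
    rcases le_or_gt l0 i with hle | hlt
    · have h1 : p l0 ≤ (Finset.Iic i).sup' Finset.nonempty_Iic p :=
        Finset.le_sup' p (Finset.mem_Iic.2 hle)
      have h2 : pbar i ≤ pbar j := hpbar hij
      linarith
    · have h1 : p i ≤ (Finset.Iic i).sup' Finset.nonempty_Iic p :=
        Finset.le_sup' p (Finset.mem_Iic.2 le_rfl)
      have h2 : pbar i - p i ≤ pbar l0 - p l0 := hdiff hlt.le
      have h3 : pbar l0 ≤ pbar j := hpbar hl0j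
      linarith
end

section
/- Let positive sequences (α_k)_{k≥1} strictly decreasing to 0 and (β_k)_{k≥0} with β_0 = 1 strictly decreasing to 0 satisfy √6·Σ_{k=1}^∞ (β_{k−1} − β_k)/√(α_k) ≤ 1 and Σ_{k=1}^∞ α_k/β_k < 267. For k ∈ ℤ₊ let A_{k,t} = {i ∈ S_t : T_{i,t−1} ≤ α_k(m/δ_{p_t})²·log T}. Suppose on round t that δ_{p_t} > 0 and δ_{p_t} ≤ 2Σ_{i∈S_t}√(log T / T_{i,t−1}). Then there exists at least one k ∈ ℤ₊ with |A_{k,t}| ≥ β_k·m. -/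
open Filter


lemma sqrt_le_of_sq_le {x y : ℝ} (hx : 0 ≤ x) (h : y ≤ x ^ 2) : Real.sqrt y ≤ x := by
  have := Real.sqrt_le_sqrt h
  rwa [Real.sqrt_sq hx] at this

lemma abel_id (b g : ℕ → ℝ) (N : ℕ) :
    g 0 * b 0 + ∑ j ∈ Finset.range N, (g (j + 1) - g j) * b (j + 1)
      = ∑ j ∈ Finset.range N, (b j - b (j + 1)) * g j + b N * g N := by
  induction N with
  | zero => simp [mul_comm]
  | succ n ih =>
    rw [Finset.sum_range_succ, Finset.sum_range_succ]
    linear_combination ih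

lemma tail_hasSum (b : ℕ → ℝ) (hbpos : ∀ k, 0 < b k) (hb : ∀ k, 0 ≤ b k - b (k + 1))
    (hbl : Tendsto b atTop (nhds 0)) (N : ℕ) :
    HasSum (fun k => b (k + N) - b (k + N + 1)) (b N) := by
  have hsd : Summable (fun k => b k - b (k + 1)) := by
    apply summable_of_sum_range_le hb
    intro n
    rw [Finset.sum_range_sub' b n]
    have := (hbpos n).le
    linarith
  have hsN : Summable (fun k => b (k + N) - b (k + N + 1)) := by
    have := (summable_nat_add_iff (f := fun k => b k - b (k + 1)) N).2 hsd
    exact this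
  rw [hsN.hasSum_iff_tendsto_nat]
  have hpart : ∀ n, ∑ k ∈ Finset.range n, (b (k + N) - b (k + N + 1)) = b N - b (n + N) := by
    intro n
    have := Finset.sum_range_sub' (fun k => b (k + N)) n
    simpa [Nat.add_right_comm] using this
  simp only [hpart]
  have h2 : Tendsto (fun n => b (n + N)) atTop (nhds 0) :=
    hbl.comp (tendsto_add_atTop_nat N)
  simpa using tendsto_const_nhds.sub h2

lemma abel_bound (b g : ℕ → ℝ) (hbpos : ∀ k, 0 < b k) (hb : ∀ k, 0 ≤ b k - b (k + 1))
    (hg : Monotone g)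
    (hbl : Tendsto b atTop (nhds 0))
    (hsum : Summable (fun k => (b k - b (k + 1)) * g k)) (N : ℕ) :
    g 0 * b 0 + ∑ j ∈ Finset.range N, (g (j + 1) - g j) * b (j + 1)
      ≤ ∑' k, (b k - b (k + 1)) * g k := by
  rw [abel_id]
  have htailsum : Summable (fun k => (b (k + N) - b (k + N + 1)) * g (k + N)) :=
    (summable_nat_add_iff (f := fun k => (b k - b (k + 1)) * g k) N).2 hsum
  have h1 : b N * g N ≤ ∑' k, (b (k + N) - b (k + N + 1)) * g (k + N) := by
    have hc : HasSum (fun k => (b (k + N) - b (k + N + 1)) * g N) (b N * g N) :=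
      (tail_hasSum b hbpos hb hbl N).mul_right (g N)
    rw [← hc.tsum_eq]
    refine Summable.tsum_le_tsum (fun k => ?_) hc.summable htailsum
    exact mul_le_mul_of_nonneg_left (hg (Nat.le_add_left N k)) (hb _)
  have h2 := Summable.sum_add_tsum_nat_add (f := fun k => (b k - b (k + 1)) * g k) N hsum
  linarith [h1, le_of_eq h2]


/-- if the per-round gap is bounded by the confidence widths, then for
some `k ≥ 1` at least `β_k·m` types in `S_t` have small counts. -/
theorem event_H_implies_G {ι : Type*} (α β : ℕ → ℝ)
    (hα : ∀ k, 1 ≤ k → 0 < α k) (hαanti : ∀ k, 1 ≤ k → α (k + 1) < α k)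
    (hαlim : Tendsto α atTop (nhds 0))
    (hβ0 : β 0 = 1) (hβ : ∀ k, 0 < β k) (hβanti : ∀ k, β (k + 1) < β k)
    (hβlim : Tendsto β atTop (nhds 0))
    (hsum1 : Summable (fun k => (β k - β (k + 1)) / Real.sqrt (α (k + 1))))
    (h1 : Real.sqrt 6 * ∑' k, (β k - β (k + 1)) / Real.sqrt (α (k + 1)) ≤ 1)
    (hsum2 : Summable (fun k => α (k + 1) / β (k + 1)))
    (h2 : (∑' k, α (k + 1) / β (k + 1)) < 267)
    (m T : ℕ) (hT : 1 ≤ T) (δ : ℝ) (hδ : 0 < δ)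
    (S : Finset ι) (hcard : S.card ≤ m)
    (Tc : ι → ℝ) (hTc : ∀ i ∈ S, 1 ≤ Tc i)
    (hH : δ ≤ 2 * ∑ i ∈ S, Real.sqrt (Real.log T / Tc i)) :
    ∃ k, 1 ≤ k ∧
      (β k * m ≤
        ((S.filter (fun i => Tc i ≤ α k * ((m : ℝ) / δ) ^ 2 * Real.log T)).card : ℝ)) := by
  classical
  set L := Real.log T with hLdef
  by_contra hcon
  push_neg at hcon
  have hT1 : (1:ℝ) ≤ (T:ℝ) := by exact_mod_cast hT
  have hL0 : 0 ≤ L := Real.log_nonneg hT1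
  have hS2 : δ / 2 ≤ ∑ i ∈ S, Real.sqrt (L / Tc i) := by linarith
  have hm : 0 < m := by
    rcases Nat.eq_zero_or_pos m with h0 | h
    · exfalso
      have hS : S = ∅ := Finset.card_eq_zero.mp (by omega)
      rw [hS] at hS2
      simp at hS2
      linarith
    · exact h
  have hmR : (0:ℝ) < m := by exact_mod_cast hm
  have hmne : (m:ℝ) ≠ 0 := ne_of_gt hmR
  have hδne : δ ≠ 0 := ne_of_gt hδ
  have hLpos : 0 < L := by
    rcases hL0.lt_or_eq with h | h
    · exact h
    · exfalso
      have hz : ∑ i ∈ S, Real.sqrt (L / Tc i) = 0 := by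
        refine Finset.sum_eq_zero fun i hi => ?_
        rw [← h]
        simp
      rw [hz] at hS2
      linarith
  have hδm : 0 < δ / (m:ℝ) := div_pos hδ hmR
  have hαpos : ∀ k : ℕ, 0 < α (k + 1) := fun k => hα (k + 1) (by omega)
  set g : ℕ → ℝ := fun k => (Real.sqrt (α (k + 1)))⁻¹ with hgdef
  have hgpos : ∀ k, 0 < g k := fun k => inv_pos.2 (Real.sqrt_pos.2 (hαpos k))
  have hgmono : Monotone g := by
    apply monotone_nat_of_le_succ
    intro k
    have h1' : α (k + 1 + 1) ≤ α (k + 1) := (hαanti (k + 1) (by omega)).le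
    have h2' := Real.sqrt_le_sqrt h1'
    exact inv_anti₀ (Real.sqrt_pos.2 (hαpos (k + 1))) h2'
  have hd : ∀ k, 0 ≤ β k - β (k + 1) := fun k => by linarith [hβanti k]
  have hsum1' : Summable (fun k => (β k - β (k + 1)) * g k) := by
    refine hsum1.congr fun k => ?_
    simp only [hgdef, div_eq_mul_inv]
  have htsum_eq : (∑' k, (β k - β (k + 1)) / Real.sqrt (α (k + 1)))
      = ∑' k, (β k - β (k + 1)) * g k := by
    refine tsum_congr fun k => ?_
    simp only [hgdef, div_eq_mul_inv]
  have hsqrt6 : 2 < Real.sqrt 6 := by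
    have h4 : Real.sqrt 4 < Real.sqrt 6 := Real.sqrt_lt_sqrt (by norm_num) (by norm_num)
    have h4' : Real.sqrt 4 = 2 := by
      rw [show (4:ℝ) = 2 ^ 2 by norm_num, Real.sqrt_sq (by norm_num : (0:ℝ) ≤ 2)]
    linarith
  have hts : ∑' k, (β k - β (k + 1)) * g k ≤ 1 / Real.sqrt 6 := by
    rw [← htsum_eq, le_div_iff₀ (by linarith : (0:ℝ) < Real.sqrt 6), mul_comm]
    exact h1
  -- choose the cutoff K0
  obtain ⟨K0, hK0⟩ : ∃ N, α (N + 1) * ((m:ℝ)/δ) ^ 2 * L < 1 := by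
    have hCpos : 0 < ((m:ℝ)/δ) ^ 2 * L := by positivity
    have hev : ∀ᶠ k in atTop, α k < 1 / (((m:ℝ)/δ) ^ 2 * L) :=
      hαlim.eventually_lt_const (by positivity)
    obtain ⟨N, hN⟩ := eventually_atTop.1 hev
    refine ⟨N, ?_⟩
    have hNα := hN (N + 1) (Nat.le_succ N)
    rw [mul_assoc]
    calc α (N + 1) * (((m:ℝ)/δ) ^ 2 * L)
        < (1 / (((m:ℝ)/δ) ^ 2 * L)) * (((m:ℝ)/δ) ^ 2 * L) :=
          mul_lt_mul_of_pos_right hNα hCpos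
      _ = 1 := by field_simp
  -- per-element bound
  have key : ∀ i ∈ S, Real.sqrt (L / Tc i)
      ≤ δ / (m:ℝ) * (g 0 + ∑ j ∈ Finset.range K0,
          (g (j + 1) - g j) * (if Tc i ≤ α (j + 1) * ((m:ℝ)/δ) ^ 2 * L then (1:ℝ) else 0)) := by
    intro i hi
    have hTci := hTc i hi
    have hTcipos : (0:ℝ) < Tc i := by linarith
    by_cases hall : ∀ j, j < K0 → Tc i ≤ α (j + 1) * ((m:ℝ)/δ) ^ 2 * L
    · have hind : ∀ j ∈ Finset.range K0,
          (g (j + 1) - g j) * (if Tc i ≤ α (j + 1) * ((m:ℝ)/δ) ^ 2 * L then (1:ℝ) else 0)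
            = g (j + 1) - g j := by
        intro j hj
        rw [if_pos (hall j (Finset.mem_range.1 hj)), mul_one]
      rw [Finset.sum_congr rfl hind, Finset.sum_range_sub g]
      have hstep : Real.sqrt (L / Tc i) ≤ δ / (m:ℝ) * g K0 := by
        have h1' : L / Tc i ≤ L := div_le_self hL0 hTci
        have ha := hαpos K0
        have e1 : (δ / (m:ℝ) * g K0) ^ 2 = δ ^ 2 / ((m:ℝ) ^ 2 * α (K0 + 1)) := by
          simp only [hgdef]
          rw [mul_pow, div_pow, inv_pow, Real.sq_sqrt ha.le]
          field_simp
        have h3 : α (K0 + 1) * ((m:ℝ)/δ) ^ 2 * L * δ ^ 2 < 1 * δ ^ 2 :=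
          mul_lt_mul_of_pos_right hK0 (by positivity)
        have h4 : α (K0 + 1) * ((m:ℝ)/δ) ^ 2 * L * δ ^ 2 = L * ((m:ℝ) ^ 2 * α (K0 + 1)) := by
          field_simp
        have h2' : L ≤ (δ / (m:ℝ) * g K0) ^ 2 := by
          rw [e1, le_div_iff₀ (by positivity)]
          nlinarith
        exact sqrt_le_of_sq_le (by positivity) (h1'.trans h2')
      have hr : g 0 + (g K0 - g 0) = g K0 := by ring
      rw [hr]
      exact hstep
    · push_neg at hall
      have hex : ∃ j, j < K0 ∧ α (j + 1) * ((m:ℝ)/δ) ^ 2 * L < Tc i := hall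
      obtain ⟨hj0K, hj0gt⟩ := Nat.find_spec hex
      set j0 := Nat.find hex with hj0def
      have hbefore : ∀ j, j < j0 → Tc i ≤ α (j + 1) * ((m:ℝ)/δ) ^ 2 * L := by
        intro j hj
        have hmin := Nat.find_min hex hj
        push_neg at hmin
        exact hmin (lt_trans hj hj0K)
      have hdrop : ∑ j ∈ Finset.range j0, (g (j + 1) - g j)
          ≤ ∑ j ∈ Finset.range K0,
              (g (j + 1) - g j) * (if Tc i ≤ α (j + 1) * ((m:ℝ)/δ) ^ 2 * L then (1:ℝ) else 0) := by
        have e2 : ∑ j ∈ Finset.range j0, (g (j + 1) - g j)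
            = ∑ j ∈ Finset.range j0,
                (g (j + 1) - g j) * (if Tc i ≤ α (j + 1) * ((m:ℝ)/δ) ^ 2 * L then (1:ℝ) else 0) := by
          refine Finset.sum_congr rfl fun j hj => ?_
          rw [if_pos (hbefore j (Finset.mem_range.1 hj)), mul_one]
        rw [e2]
        apply Finset.sum_le_sum_of_subset_of_nonneg (Finset.range_subset_range.2 hj0K.le)
        intro j _ _
        have hnn : 0 ≤ g (j + 1) - g j := sub_nonneg.2 (hgmono (Nat.le_succ j))
        have hite : (0:ℝ) ≤ if Tc i ≤ α (j + 1) * ((m:ℝ)/δ) ^ 2 * L then (1:ℝ) else 0 := by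
          split_ifs <;> norm_num
        exact mul_nonneg hnn hite
      have hteles : ∑ j ∈ Finset.range j0, (g (j + 1) - g j) = g j0 - g 0 :=
        Finset.sum_range_sub g j0
      have hstep : Real.sqrt (L / Tc i) ≤ δ / (m:ℝ) * g j0 := by
        have ha := hαpos j0
        have hθpos : 0 < α (j0 + 1) * ((m:ℝ)/δ) ^ 2 * L := by positivity
        have h1' : L / Tc i ≤ L / (α (j0 + 1) * ((m:ℝ)/δ) ^ 2 * L) := by
          apply div_le_div_of_nonneg_left hL0 hθpos hj0gt.le
        have h2' : L / (α (j0 + 1) * ((m:ℝ)/δ) ^ 2 * L) = (δ / (m:ℝ) * g j0) ^ 2 := by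
          simp only [hgdef]
          rw [mul_pow, div_pow, inv_pow, Real.sq_sqrt ha.le]
          field_simp
        exact sqrt_le_of_sq_le (by positivity) (h1'.trans h2'.le)
      calc Real.sqrt (L / Tc i) ≤ δ / (m:ℝ) * g j0 := hstep
        _ = δ / (m:ℝ) * (g 0 + ∑ j ∈ Finset.range j0, (g (j + 1) - g j)) := by
            rw [hteles]; ring
        _ ≤ _ := by
            apply mul_le_mul_of_nonneg_left _ hδm.le
            have := hdrop
            linarith
  -- sum the per-element bounds
  have hchain : ∑ i ∈ S, Real.sqrt (L / Tc i)
      ≤ δ / (m:ℝ) * ((S.card : ℝ) * g 0 + ∑ j ∈ Finset.range K0, (g (j + 1) - g j) *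
          ((S.filter (fun i => Tc i ≤ α (j + 1) * ((m:ℝ)/δ) ^ 2 * L)).card : ℝ)) := by
    calc ∑ i ∈ S, Real.sqrt (L / Tc i)
        ≤ ∑ i ∈ S, δ / (m:ℝ) * (g 0 + ∑ j ∈ Finset.range K0,
            (g (j + 1) - g j) * (if Tc i ≤ α (j + 1) * ((m:ℝ)/δ) ^ 2 * L then (1:ℝ) else 0)) :=
          Finset.sum_le_sum key
      _ = δ / (m:ℝ) * ∑ i ∈ S, (g 0 + ∑ j ∈ Finset.range K0,
            (g (j + 1) - g j) * (if Tc i ≤ α (j + 1) * ((m:ℝ)/δ) ^ 2 * L then (1:ℝ) else 0)) := by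
          rw [Finset.mul_sum]
      _ = _ := by
          congr 1
          rw [Finset.sum_add_distrib, Finset.sum_const, nsmul_eq_mul]
          congr 1
          rw [Finset.sum_comm]
          refine Finset.sum_congr rfl fun j _ => ?_
          rw [← Finset.mul_sum]
          congr 1
          rw [Finset.sum_boole]
  have hbound : (S.card : ℝ) * g 0 + ∑ j ∈ Finset.range K0, (g (j + 1) - g j) *
          ((S.filter (fun i => Tc i ≤ α (j + 1) * ((m:ℝ)/δ) ^ 2 * L)).card : ℝ)
      ≤ (m:ℝ) * (g 0 * β 0 + ∑ j ∈ Finset.range K0, (g (j + 1) - g j) * β (j + 1)) := by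
    rw [mul_add, Finset.mul_sum]
    apply add_le_add
    · rw [hβ0]
      have hSm : (S.card : ℝ) ≤ (m:ℝ) := by exact_mod_cast hcard
      have := mul_le_mul_of_nonneg_right hSm (hgpos 0).le
      linarith
    · apply Finset.sum_le_sum
      intro j _
      have hc := hcon (j + 1) (by omega)
      have hnn : 0 ≤ g (j + 1) - g j := sub_nonneg.2 (hgmono (Nat.le_succ j))
      calc (g (j + 1) - g j) *
              ((S.filter (fun i => Tc i ≤ α (j + 1) * ((m:ℝ)/δ) ^ 2 * L)).card : ℝ)
          ≤ (g (j + 1) - g j) * (β (j + 1) * (m:ℝ)) := mul_le_mul_of_nonneg_left hc.le hnn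
        _ = (m:ℝ) * ((g (j + 1) - g j) * β (j + 1)) := by ring
  have habel := abel_bound β g hβ hd hgmono hβlim hsum1' K0
  have hfinal : ∑ i ∈ S, Real.sqrt (L / Tc i) ≤ δ * (1 / Real.sqrt 6) := by
    calc ∑ i ∈ S, Real.sqrt (L / Tc i)
        ≤ δ / (m:ℝ) * ((S.card : ℝ) * g 0 + ∑ j ∈ Finset.range K0, (g (j + 1) - g j) *
            ((S.filter (fun i => Tc i ≤ α (j + 1) * ((m:ℝ)/δ) ^ 2 * L)).card : ℝ)) := hchain
      _ ≤ δ / (m:ℝ) * ((m:ℝ) * (g 0 * β 0 + ∑ j ∈ Finset.range K0,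
            (g (j + 1) - g j) * β (j + 1))) := mul_le_mul_of_nonneg_left hbound hδm.le
      _ = δ * (g 0 * β 0 + ∑ j ∈ Finset.range K0, (g (j + 1) - g j) * β (j + 1)) := by
          field_simp
      _ ≤ δ * (∑' k, (β k - β (k + 1)) * g k) := mul_le_mul_of_nonneg_left habel hδ.le
      _ ≤ δ * (1 / Real.sqrt 6) := mul_le_mul_of_nonneg_left hts hδ.le
  have h12 : 1 / Real.sqrt 6 < 1 / 2 :=
    one_div_lt_one_div_of_lt (by norm_num : (0:ℝ) < 2) hsqrt6
  have hmul : δ * (1 / Real.sqrt 6) < δ * (1 / 2) := mul_lt_mul_of_pos_left h12 hδ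
  linarith
end
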